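/- In the Drinfeld–Kohno Lie algebra 𝔤_n, the Lie subalgebra 𝔦_n generated by the elements t_{n1}, t_{n2}, ..., t_{n,n-1} is an ideal of 𝔤_n. -/

import Mathlib

noncomputable section
open FreeLieAlgebra

def DKrels (n : ℕ) : Set (FreeLieAlgebra ℚ (Fin n × Fin n)) :=
  {x | (∃ i, x = of ℚ (i, i)) ∨
       (∃ i j, x = of ℚ (i, j) - of ℚ (j, i)) ∨
       (∃ i j k, i ≠ j ∧ i ≠ k ∧ j ≠ k ∧
          x = ⁅of ℚ (i, j) + of ℚ (i, k), of ℚ (j, k)⁆) ∨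
       (∃ i j k l, ({i, j} ∩ {k, l} : Set (Fin n)) = ∅ ∧ i ≠ j ∧ k ≠ l ∧
          x = ⁅of ℚ (i, j), of ℚ (k, l)⁆)}

def DKideal (n : ℕ) : LieIdeal ℚ (FreeLieAlgebra ℚ (Fin n × Fin n)) :=
  LieSubmodule.lieSpan ℚ _ (DKrels n)

/-- The Drinfeld–Kohno Lie algebra on `n` strands over `ℚ`. -/
def DK (n : ℕ) : Type := FreeLieAlgebra ℚ (Fin n × Fin n) ⧸ DKideal n

instance (n : ℕ) : LieRing (DK n) := by unfold DK; infer_instance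
instance (n : ℕ) : LieAlgebra ℚ (DK n) := by unfold DK; infer_instance

/-- The generator `t_{ij}` of the Drinfeld–Kohno Lie algebra. -/
def tDK {n : ℕ} (i j : Fin n) : DK n :=
  LieSubmodule.Quotient.mk' (DKideal n) (of ℚ (i, j))

/-!
The normalizer of `𝔦_n` is a Lie subalgebra, and since `ad x` is a derivation it consists of the
`x` with `[x, t_{nk}] ∈ 𝔦_n` for all `k`; so it is all of `𝔤_n` once it contains every `t_{ij}`.
If `n ∈ {i, j}` then `t_{ij} ∈ 𝔦_n`; if `k ∉ {i, j}` the bracket `[t_{ij}, t_{nk}]` vanishes; and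
if, say, `i = k`, the relations `[t_{nk} + t_{nj}, t_{kj}] = 0` and `[t_{kn} + t_{kj}, t_{nj}] = 0`
give `[t_{kj}, t_{nk}] = [t_{nk}, t_{nj}]`.
-/

namespace LieSubalgebra

variable {R L : Type*} [CommRing R] [LieRing L] [LieAlgebra R L]

theorem mem_normalizer_lieSpan_iff {s : Set L} {x : L} :
    x ∈ (lieSpan R L s).normalizer ↔ ∀ y ∈ s, ⁅x, y⁆ ∈ lieSpan R L s := by
  refine ⟨fun hx y hy ↦ (mem_normalizer_iff _ x).mp hx y (subset_lieSpan hy), fun h ↦ ?_⟩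
  rw [mem_normalizer_iff]
  intro y hy
  induction hy using lieSpan_induction with
  | mem y hy => exact h y hy
  | zero => simp
  | add y z _ _ hy hz => simpa only [lie_add] using add_mem hy hz
  | smul t y _ hy => simpa only [lie_smul] using (lieSpan R L s).smul_mem t hy
  | lie y z hy' hz' hy hz =>
    rw [leibniz_lie]
    exact add_mem (lie_mem _ hy hz') (lie_mem _ hy' hz)

theorem lieSpan_image_eq_top_of_surjective {L₂ : Type*} [LieRing L₂] [LieAlgebra R L₂]
    {f : L →ₗ⁅R⁆ L₂} (hf : Function.Surjective f) {s : Set L} (hs : lieSpan R L s = ⊤) :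
    lieSpan R L₂ (f '' s) = ⊤ := by
  rw [← map_lieSpan, hs, ← map_top, f.range_eq_top.mpr hf]

end LieSubalgebra

theorem FreeLieAlgebra.lieSpan_range_of (R X : Type*) [CommRing R] :
    LieSubalgebra.lieSpan R (FreeLieAlgebra R X) (Set.range (of R)) = ⊤ := by
  set S := LieSubalgebra.lieSpan R (FreeLieAlgebra R X) (Set.range (of R))
  let F : FreeLieAlgebra R X →ₗ⁅R⁆ S :=
    lift R fun x ↦ ⟨of R x, LieSubalgebra.subset_lieSpan ⟨x, rfl⟩⟩
  have hF : S.incl.comp F = LieHom.id := hom_ext fun x ↦ by simp [F]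
  rw [eq_top_iff]
  intro q _
  have hq : S.incl (F q) = q := LieHom.congr_fun hF q
  exact hq ▸ (F q).2

namespace DK

def mk (n : ℕ) : FreeLieAlgebra ℚ (Fin n × Fin n) →ₗ⁅ℚ⁆ DK n :=
  { LieSubmodule.Quotient.mk' (DKideal n) with map_lie' := rfl }

theorem mk_surjective (n : ℕ) : Function.Surjective (mk n) :=
  LieSubmodule.Quotient.surjective_mk' (DKideal n)

theorem mk_eq_zero_of_mem_rels {n : ℕ} {x : FreeLieAlgebra ℚ (Fin n × Fin n)}
    (hx : x ∈ DKrels n) : mk n x = 0 :=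
  (LieSubmodule.Quotient.mk_eq_zero' (N := DKideal n)).mpr (LieSubmodule.subset_lieSpan hx)

theorem lieSpan_range_tDK (n : ℕ) :
    LieSubalgebra.lieSpan ℚ (DK n) (Set.range fun p : Fin n × Fin n ↦ tDK p.1 p.2) = ⊤ := by
  rw [← LieSubalgebra.lieSpan_image_eq_top_of_surjective (mk_surjective n)
    (FreeLieAlgebra.lieSpan_range_of ℚ _), ← Set.range_comp]
  rfl

end DK

theorem tDK_self {n : ℕ} (i : Fin n) : tDK i i = 0 :=
  DK.mk_eq_zero_of_mem_rels (Or.inl ⟨i, rfl⟩)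

theorem tDK_comm {n : ℕ} (i j : Fin n) : tDK i j = tDK j i := by
  have h := DK.mk_eq_zero_of_mem_rels (Or.inr (Or.inl ⟨i, j, rfl⟩))
  rwa [map_sub, sub_eq_zero] at h

theorem lie_tDK_add_tDK {n : ℕ} {i j k : Fin n} (hij : i ≠ j) (hik : i ≠ k) (hjk : j ≠ k) :
    ⁅tDK i j + tDK i k, tDK j k⁆ = 0 :=
  DK.mk_eq_zero_of_mem_rels (Or.inr (Or.inr (Or.inl ⟨i, j, k, hij, hik, hjk, rfl⟩)))

theorem lie_tDK_tDK_of_disjoint {n : ℕ} {i j k l : Fin n} (hij : i ≠ j) (hkl : k ≠ l)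
    (hik : i ≠ k) (hil : i ≠ l) (hjk : j ≠ k) (hjl : j ≠ l) :
    ⁅tDK i j, tDK k l⁆ = 0 := by
  have hdisj : ({i, j} ∩ {k, l} : Set (Fin n)) = ∅ := by
    ext x
    simp only [Set.mem_inter_iff, Set.mem_insert_iff, Set.mem_singleton_iff]
    grind
  exact DK.mk_eq_zero_of_mem_rels (Or.inr (Or.inr (Or.inr ⟨i, j, k, l, hdisj, hij, hkl, rfl⟩)))

theorem lie_tDK_tDK_eq_lie_tDK_tDK {n : ℕ} {a j k : Fin n} (hak : a ≠ k) (haj : a ≠ j)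
    (hkj : k ≠ j) :
    ⁅tDK k j, tDK a k⁆ = ⁅tDK a k, tDK a j⁆ := by
  have h₁ := lie_tDK_add_tDK hak haj hkj
  have h₂ := lie_tDK_add_tDK hkj hak.symm haj.symm
  rw [add_lie] at h₁
  rw [tDK_comm k a, tDK_comm j a, add_lie] at h₂
  calc ⁅tDK k j, tDK a k⁆ = -⁅tDK a k, tDK k j⁆ := (lie_skew _ _).symm
    _ = ⁅tDK a j, tDK k j⁆ := neg_eq_of_add_eq_zero_right h₁
    _ = -⁅tDK k j, tDK a j⁆ := (lie_skew _ _).symm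
    _ = ⁅tDK a k, tDK a j⁆ := neg_eq_of_add_eq_zero_right h₂

namespace DK

def lastStrand (n : ℕ) : LieSubalgebra ℚ (DK (n + 1)) :=
  LieSubalgebra.lieSpan ℚ (DK (n + 1))
    {z | ∃ k : Fin (n + 1), k ≠ Fin.last n ∧ z = tDK (Fin.last n) k}

theorem tDK_last_mem_lastStrand {n : ℕ} (k : Fin (n + 1)) :
    tDK (Fin.last n) k ∈ lastStrand n := by
  by_cases hk : k = Fin.last n
  · rw [hk, tDK_self]
    exact zero_mem _
  · exact LieSubalgebra.subset_lieSpan ⟨k, hk, rfl⟩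

theorem lie_tDK_tDK_last_mem_lastStrand {n : ℕ} (i j : Fin (n + 1)) {k : Fin (n + 1)}
    (hk : k ≠ Fin.last n) : ⁅tDK i j, tDK (Fin.last n) k⁆ ∈ lastStrand n := by
  have hlast := tDK_last_mem_lastStrand k
  by_cases hi : i = Fin.last n
  · exact (lastStrand n).lie_mem (hi ▸ tDK_last_mem_lastStrand j) hlast
  by_cases hj : j = Fin.last n
  · exact (lastStrand n).lie_mem (tDK_comm i j ▸ hj ▸ tDK_last_mem_lastStrand i) hlast
  by_cases hij : i = j
  · rw [hij, tDK_self, zero_lie]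
    exact zero_mem _
  by_cases hik : i = k
  · rw [hik, lie_tDK_tDK_eq_lie_tDK_tDK (Ne.symm hk) (Ne.symm hj) (hik ▸ hij)]
    exact (lastStrand n).lie_mem hlast (tDK_last_mem_lastStrand j)
  by_cases hjk : j = k
  · rw [hjk, tDK_comm, lie_tDK_tDK_eq_lie_tDK_tDK (Ne.symm hk) (Ne.symm hi) (hjk ▸ Ne.symm hij)]
    exact (lastStrand n).lie_mem hlast (tDK_last_mem_lastStrand i)
  rw [lie_tDK_tDK_of_disjoint hij (Ne.symm hk) hi hik hj hjk]
  exact zero_mem _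

theorem tDK_mem_normalizer_lastStrand {n : ℕ} (i j : Fin (n + 1)) :
    tDK i j ∈ (lastStrand n).normalizer :=
  LieSubalgebra.mem_normalizer_lieSpan_iff.mpr fun _ ⟨_, hk, hz⟩ ↦
    hz ▸ lie_tDK_tDK_last_mem_lastStrand i j hk

theorem normalizer_lastStrand (n : ℕ) : (lastStrand n).normalizer = ⊤ := by
  rw [eq_top_iff, ← lieSpan_range_tDK, LieSubalgebra.lieSpan_le]
  rintro _ ⟨⟨i, j⟩, rfl⟩
  exact tDK_mem_normalizer_lastStrand i j

end DK

/-- in the Drinfeld–Kohno Lie algebra `𝔤_{n+1}`, the Lie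
subalgebra `𝔦` generated by the elements `t_{nk}` (bracket of the last strand
with the others) is an ideal: `⁅x, y⁆ ∈ 𝔦` whenever `y ∈ 𝔦`. -/
theorem dk_last_strand_subalgebra_is_ideal (n : ℕ) :
    ∀ x y : DK (n + 1),
      y ∈ LieSubalgebra.lieSpan ℚ (DK (n + 1))
            {z | ∃ k : Fin (n + 1), k ≠ Fin.last n ∧ z = tDK (Fin.last n) k} →
      ⁅x, y⁆ ∈ LieSubalgebra.lieSpan ℚ (DK (n + 1))
            {z | ∃ k : Fin (n + 1), k ≠ Fin.last n ∧ z = tDK (Fin.last n) k} := by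
  intro x
  rw [← LieSubalgebra.mem_normalizer_iff, ← DK.lastStrand, DK.normalizer_lastStrand]
  exact LieSubalgebra.mem_top x
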